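/- Let G be a simple graph, let each vertex be assigned to at most one cluster where each cluster is a subset of the neighborhood of its center, and let H₀ be a subgraph containing, for each clustered vertex, an edge to its cluster center. If σ is a shortest path in G and k' is the number of edges of σ not in H₀ all of whose endpoints are clustered, then the number of distinct clusters intersecting σ is at least k'/3. -/
import Mathlib

open SimpleGraph

private lemma aux_dist_getVert_le {V : Type*} {G : SimpleGraph V} (hG : G.Connected)
    {x y : V} (w : G.Walk x y) : ∀ {i j : ℕ}, i ≤ j →
    G.dist (w.getVert i) (w.getVert j) ≤ j - i := by
  intro i j
  induction j with
  | zero => intro h; interval_cases i; simp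
  | succ j ih =>
    intro h
    rcases Nat.lt_or_ge i (j + 1) with h' | h'
    · have hij : i ≤ j := Nat.lt_succ_iff.mp h'
      by_cases hj : j < w.length
      · have hadj : G.Adj (w.getVert j) (w.getVert (j+1)) := w.adj_getVert_succ hj
        have h1 : G.dist (w.getVert j) (w.getVert (j+1)) ≤ 1 := by
          simpa using G.dist_le (Walk.cons hadj Walk.nil)
        calc G.dist (w.getVert i) (w.getVert (j+1))
            ≤ G.dist (w.getVert i) (w.getVert j)
              + G.dist (w.getVert j) (w.getVert (j+1)) := hG.dist_triangle
          _ ≤ (j - i) + 1 := Nat.add_le_add (ih hij) h1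
          _ = j + 1 - i := by omega
      · have h2 : w.getVert (j+1) = w.getVert j := by
          rw [w.getVert_of_length_le (by omega), w.getVert_of_length_le (by omega)]
        rw [h2]
        exact le_trans (ih hij) (by omega)
    · have : i = j + 1 := by omega
      subst this; simp

private lemma aux_sub_le_dist {V : Type*} {G : SimpleGraph V} (hG : G.Connected)
    {x y : V} (w : G.Walk x y) (hsp : w.length = G.dist x y)
    {a b : ℕ} (hab : a ≤ b) (hb : b ≤ w.length) :
    b - a ≤ G.dist (w.getVert a) (w.getVert b) := by
  have h1 : G.dist x (w.getVert a) ≤ a := by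
    simpa using aux_dist_getVert_le hG w (Nat.zero_le a)
  have h2 : G.dist (w.getVert b) y ≤ w.length - b := by
    have := aux_dist_getVert_le hG w hb
    simpa [w.getVert_length] using this
  have h3 : G.dist x y ≤ G.dist x (w.getVert a)
      + G.dist (w.getVert a) (w.getVert b) + G.dist (w.getVert b) y :=
    le_trans hG.dist_triangle (Nat.add_le_add_right hG.dist_triangle _)
  omega

/-- **Many clusters intersect a path with many missing edges.**
Clusters `C i` are pairwise disjoint sets of neighbors of their centers
`ctr i`, and `H₀` contains the edge from each clustered vertex to its
center.  If `σ` is a shortest path of `G` and `k'` is the number of its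
edges not in `H₀` both of whose endpoints are clustered, then at least
`k'/3` distinct clusters intersect `σ`. -/
theorem clusters_hit_by_path {V : Type*} [Fintype V] [DecidableEq V]
    (G : SimpleGraph V) (hG : G.Connected)
    (m : ℕ) (C : Fin m → Finset V) (ctr : Fin m → V)
    (hdisj : ∀ i j, i ≠ j → Disjoint (C i) (C j))
    (hnbr : ∀ i, ∀ v ∈ C i, G.Adj (ctr i) v)
    (H₀ : SimpleGraph V) (hH₀ : H₀ ≤ G)
    (hctr : ∀ i, ∀ v ∈ C i, H₀.Adj v (ctr i))
    (x y : V) (σ : G.Walk x y) (hσ : σ.IsPath) (hsp : σ.length = G.dist x y)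
    (k' : ℕ)
    (hk' : k' = {e : Sym2 V | e ∈ σ.edges ∧ e ∉ H₀.edgeSet ∧
        ∀ v ∈ e, ∃ i, v ∈ C i}.ncard) :
    k' ≤ 3 * {i : Fin m | ∃ v ∈ C i, v ∈ σ.support}.ncard := by
  classical
  -- positions of cluster `i` on `σ` fit in a window of length 2
  have hwin : ∀ i : Fin m,
      ((Finset.range (σ.length + 1)).filter (fun a => σ.getVert a ∈ C i)).card ≤ 3 := by
    intro i
    set N := (Finset.range (σ.length + 1)).filter (fun a => σ.getVert a ∈ C i) with hN
    rcases N.eq_empty_or_nonempty with h | h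
    · simp [h]
    · have hsub : N ⊆ Finset.Icc (N.min' h) (N.min' h + 2) := by
        intro a ha
        have hmin := N.min'_mem h
        have h1 : N.min' h ≤ a := N.min'_le a ha
        simp only [hN, Finset.mem_filter, Finset.mem_range] at ha hmin
        have hd2 : G.dist (σ.getVert (N.min' h)) (σ.getVert a) ≤ 2 := by
          refine le_trans (G.dist_le (Walk.cons (hnbr i _ hmin.2).symm
            (Walk.cons (hnbr i _ ha.2) Walk.nil))) ?_
          simp
        have hlb := aux_sub_le_dist hG σ hsp h1 (by omega)
        exact Finset.mem_Icc.mpr ⟨h1, by omega⟩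
      calc N.card ≤ (Finset.Icc (N.min' h) (N.min' h + 2)).card := Finset.card_le_card hsub
        _ = 3 := by rw [Nat.card_Icc]; omega
  -- at most 3 vertices of cluster `i` lie on the support
  have hsupp3 : ∀ i : Fin m, (σ.support.toFinset.filter (· ∈ C i)).card ≤ 3 := by
    intro i
    have hsub : σ.support.toFinset.filter (· ∈ C i) ⊆
        ((Finset.range (σ.length + 1)).filter (fun a => σ.getVert a ∈ C i)).image σ.getVert := by
      intro u hu
      simp only [Finset.mem_filter, List.mem_toFinset] at hu
      obtain ⟨a, hget, hlen⟩ := Walk.mem_support_iff_exists_getVert.mp hu.1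
      exact Finset.mem_image.mpr ⟨a, by
        simp only [Finset.mem_filter, Finset.mem_range]
        exact ⟨⟨by omega, hget ▸ hu.2⟩, hget⟩⟩
    exact le_trans (Finset.card_le_card hsub) (le_trans Finset.card_image_le (hwin i))
  -- the bad darts
  set S' : Finset G.Dart := σ.darts.toFinset.filter
    (fun d => d.edge ∉ H₀.edgeSet ∧ ∀ v ∈ d.edge, ∃ i, v ∈ C i) with hS'
  -- edges nodup gives injectivity of `Dart.edge` on `σ.darts`
  have hedge_inj : ∀ d₁ ∈ σ.darts.toFinset, ∀ d₂ ∈ σ.darts.toFinset,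
      d₁.edge = d₂.edge → d₁ = d₂ := by
    have hnodup : (σ.darts.map SimpleGraph.Dart.edge).Nodup := hσ.isTrail.edges_nodup
    intro d₁ h₁ d₂ h₂
    exact List.inj_on_of_nodup_map hnodup (List.mem_toFinset.mp h₁) (List.mem_toFinset.mp h₂)
  have hfst_inj : ∀ d₁ ∈ σ.darts.toFinset, ∀ d₂ ∈ σ.darts.toFinset,
      d₁.fst = d₂.fst → d₁ = d₂ := by
    have hnodup : (σ.darts.map (·.fst)).Nodup := by
      rw [Walk.map_fst_darts]
      exact hσ.support_nodup.sublist (List.dropLast_sublist _)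
    intro d₁ h₁ d₂ h₂
    exact List.inj_on_of_nodup_map hnodup (List.mem_toFinset.mp h₁) (List.mem_toFinset.mp h₂)
  -- k' = S'.card
  have hset : {e : Sym2 V | e ∈ σ.edges ∧ e ∉ H₀.edgeSet ∧ ∀ v ∈ e, ∃ i, v ∈ C i}
      = ↑(S'.image SimpleGraph.Dart.edge) := by
    ext e
    simp only [Set.mem_setOf_eq, Finset.coe_image, Set.mem_image, Finset.mem_coe, hS',
      Finset.mem_filter, List.mem_toFinset]
    constructor
    · rintro ⟨he, h1, h2⟩
      obtain ⟨d, hd, rfl⟩ := List.mem_map.mp he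
      exact ⟨d, ⟨hd, h1, h2⟩, rfl⟩
    · rintro ⟨d, ⟨hd, h1, h2⟩, rfl⟩
      exact ⟨List.mem_map.mpr ⟨d, hd, rfl⟩, h1, h2⟩
  have hkS : k' = S'.card := by
    rw [hk', hset, Set.ncard_coe_finset]
    exact Finset.card_image_of_injOn (fun d₁ h₁ d₂ h₂ =>
      hedge_inj d₁ (Finset.mem_filter.mp h₁).1 d₂ (Finset.mem_filter.mp h₂).1)
  -- the cluster-hitting set as a Finset
  set T : Finset (Fin m) := Finset.univ.filter (fun i => ∃ v ∈ C i, v ∈ σ.support) with hT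
  have hTset : {i : Fin m | ∃ v ∈ C i, v ∈ σ.support} = ↑T := by
    ext i; simp [hT]
  rw [hkS, hTset, Set.ncard_coe_finset]
  -- if there are no clusters, S' is empty
  rcases Nat.eq_zero_or_pos m with hm | hm
  · have : S' = ∅ := by
      refine Finset.eq_empty_of_forall_notMem fun d hd => ?_
      simp only [hS', Finset.mem_filter] at hd
      obtain ⟨i, -⟩ := hd.2.2 d.fst (by exact Sym2.mem_mk_left _ _)
      exact absurd i.2 (by omega)
    simp [this]
  -- map each bad dart to a cluster containing its first vertex
  have hdefault : Fin m := ⟨0, hm⟩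
  set f : G.Dart → Fin m := fun d =>
    if h : ∃ i, d.fst ∈ C i then h.choose else hdefault with hf
  have hfspec : ∀ d ∈ S', d.fst ∈ C (f d) := by
    intro d hd
    simp only [hS', Finset.mem_filter] at hd
    have h : ∃ i, d.fst ∈ C i :=
      hd.2.2 d.fst (by exact Sym2.mem_mk_left _ _)
    simp only [hf, dif_pos h]
    exact h.choose_spec
  refine Finset.card_le_mul_card_image_of_maps_to (f := f) ?_ 3 ?_
  · intro d hd
    have hsup : d.fst ∈ σ.support := Walk.dart_fst_mem_support_of_mem_darts σ
      (List.mem_toFinset.mp (Finset.mem_filter.mp (hS' ▸ hd)).1)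
    exact Finset.mem_filter.mpr ⟨Finset.mem_univ _, d.fst, hfspec d hd, hsup⟩
  · intro i hi
    calc (S'.filter (fun d => f d = i)).card
        = ((S'.filter (fun d => f d = i)).image (·.fst)).card := by
          refine (Finset.card_image_of_injOn fun d₁ h₁ d₂ h₂ h => ?_).symm
          exact hfst_inj d₁ (Finset.mem_filter.mp (Finset.mem_filter.mp h₁).1).1
            d₂ (Finset.mem_filter.mp (Finset.mem_filter.mp h₂).1).1 h
      _ ≤ (σ.support.toFinset.filter (· ∈ C i)).card := by
          refine Finset.card_le_card ?_
          intro u hu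
          obtain ⟨d, hd, rfl⟩ := Finset.mem_image.mp hu
          obtain ⟨hdS, hdi⟩ := Finset.mem_filter.mp hd
          have h1 : d.fst ∈ C (f d) := hfspec d hdS
          have h2 : d.fst ∈ σ.support := Walk.dart_fst_mem_support_of_mem_darts σ
            (List.mem_toFinset.mp (Finset.mem_filter.mp (hS' ▸ hdS)).1)
          exact Finset.mem_filter.mpr ⟨List.mem_toFinset.mpr h2, hdi ▸ h1⟩
      _ ≤ 3 := hsupp3 i
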